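/- Let Γ be a semicomplete multipartite commutative weakly distance-regular digraph, and let x,y∈VΓ with y∉N⁺(x)∪N⁻(x). Then for every vertex w, w∈N⁺(x)∪N⁻(x) if and only if w∈N⁺(y)∪N⁻(y). Moreover, if ∂(x,y)≥3, then N⁺(x)=N⁺(y) and N⁻(x)=N⁻(y). -/

import Mathlib

open Set Matrix

namespace Paper

variable {V : Type*} {W : Type*}

/-- There is a directed walk of length `n` from `x` to `y` in the digraph with arc relation `A`. -/
def HasPathOfLength (A : V → V → Prop) (x y : V) (n : ℕ) : Prop :=
  ∃ p : ℕ → V, p 0 = x ∧ p n = y ∧ ∀ i < n, A (p i) (p (i + 1))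

/-- A digraph is strongly connected if there is a directed path between any two vertices. -/
def IsStronglyConnected (A : V → V → Prop) : Prop :=
  ∀ x y, ∃ n, HasPathOfLength A x y n

/-- The distance `∂(x,y)`: the length of a shortest directed path from `x` to `y`. -/
noncomputable def ddist (A : V → V → Prop) (x y : V) : ℕ :=
  sInf {n | HasPathOfLength A x y n}

/-- The two-way distance `∂̃(x,y) = (∂(x,y), ∂(y,x))`. -/
noncomputable def tdist (A : V → V → Prop) (x y : V) : ℕ × ℕ :=
  (ddist A x y, ddist A y x)

/-- The two-way distance set `∂̃(Γ)`. -/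
def tdistSet (A : V → V → Prop) : Set (ℕ × ℕ) :=
  {d | ∃ x y, tdist A x y = d}

/-- The number `p_{ĩ,j̃}(x,y) = |{z : ∂̃(x,z) = ĩ, ∂̃(z,y) = j̃}|`. -/
noncomputable def pnum (A : V → V → Prop) (i j : ℕ × ℕ) (x y : V) : ℕ :=
  {z | tdist A x z = i ∧ tdist A z y = j}.ncard

/-- A weakly distance-regular digraph. -/
def IsWDRD (A : V → V → Prop) : Prop :=
  IsStronglyConnected A ∧
  (∃ d ∈ tdistSet A, d.1 ≠ d.2) ∧
  ∀ i j : ℕ × ℕ, ∀ x y x' y' : V,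
    tdist A x y = tdist A x' y' → pnum A i j x y = pnum A i j x' y'

/-- Commutativity of the attached scheme: `p_{ĩ,j̃}^{h̃} = p_{j̃,ĩ}^{h̃}`. -/
def IsCommutativeDigraph (A : V → V → Prop) : Prop :=
  ∀ i j : ℕ × ℕ, ∀ x y : V, pnum A i j x y = pnum A j i x y

/-- A commutative weakly distance-regular digraph. -/
def IsCWDRD (A : V → V → Prop) : Prop :=
  IsWDRD A ∧ IsCommutativeDigraph A

/-- `A` is semicomplete multipartite with partition given by `f` (parts are the fibres). -/
def IsSemicompleteMultipartiteWith (A : V → V → Prop) {m : ℕ} (f : V → Fin m) : Prop :=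
  (∀ x, ¬ A x x) ∧ (∀ i, 2 ≤ {x | f x = i}.ncard) ∧
  ∀ x y : V, x ≠ y → ((A x y ∨ A y x) ↔ f x ≠ f y)

/-- A semicomplete multipartite digraph: the vertex set is partitioned into `m ≥ 2` partite
sets, each of size at least `2`, and two distinct vertices are joined by an arc in at least
one direction iff they lie in different partite sets. -/
def IsSemicompleteMultipartite (A : V → V → Prop) : Prop :=
  ∃ m : ℕ, 2 ≤ m ∧ ∃ f : V → Fin m, IsSemicompleteMultipartiteWith A f

/-- A semicomplete digraph: any two distinct vertices are joined by an arc in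
at least one direction. -/
def IsSemicomplete (A : V → V → Prop) : Prop :=
  (∀ x, ¬ A x x) ∧ ∀ x y : V, x ≠ y → A x y ∨ A y x

/-- A circuit of length `n`: a sequence `w₀,…,w_{n-1}` with consecutive arcs and an arc
from `w_{n-1}` back to `w₀`. -/
def HasCircuitOfLength (A : V → V → Prop) (n : ℕ) : Prop :=
  ∃ p : ℕ → V, p n = p 0 ∧ ∀ i < n, A (p i) (p (i + 1))

/-- The girth: the length of a shortest circuit. -/
noncomputable def girth (A : V → V → Prop) : ℕ :=
  sInf {n | 1 ≤ n ∧ HasCircuitOfLength A n}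

/-- Lexicographic product of digraphs. -/
def lexProd (A : V → V → Prop) (B : W → W → Prop) : V × W → V × W → Prop :=
  fun u v => A u.1 v.1 ∨ (u.1 = v.1 ∧ B u.2 v.2)

/-- The `n`-coclique extension of a digraph: `A ∘ K̄ₙ`. -/
def cocliqueExt (A : V → V → Prop) (n : ℕ) : V × Fin n → V × Fin n → Prop :=
  lexProd A (fun _ _ : Fin n => False)

/-- Isomorphism of digraphs. -/
def Iso (A : V → V → Prop) (B : W → W → Prop) : Prop :=
  ∃ e : V ≃ W, ∀ x y : V, A x y ↔ B (e x) (e y)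

/-- An `(m,r)`-team semicomplete multipartite digraph with partite sets the fibres of `f`:
`m ≥ 2` parts, each of size `r ≥ 2`. -/
def IsTeamSMD (A : V → V → Prop) {m : ℕ} (f : V → Fin m) (r : ℕ) : Prop :=
  2 ≤ m ∧ 2 ≤ r ∧ (∀ x, ¬ A x x) ∧ (∀ i : Fin m, {x | f x = i}.ncard = r) ∧
  ∀ x y : V, x ≠ y → ((A x y ∨ A y x) ↔ f x ≠ f y)

/-- Regular of valency `k`: every vertex has exactly `k` out-neighbours and `k`
in-neighbours. -/
def IsRegularOfValency (A : V → V → Prop) (k : ℕ) : Prop :=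
  ∀ x : V, {y | A x y}.ncard = k ∧ {y | A y x}.ncard = k

open Classical in
/-- Adjacency matrix of the symmetric part `EΓ`. -/
noncomputable def matE (A : V → V → Prop) : Matrix V V ℤ :=
  Matrix.of fun x y => if A x y ∧ A y x then 1 else 0

open Classical in
/-- Adjacency matrix of the asymmetric part `A⃗Γ`. -/
noncomputable def matAr (A : V → V → Prop) : Matrix V V ℤ :=
  Matrix.of fun x y => if A x y ∧ ¬ A y x then 1 else 0

open Classical in
/-- Adjacency matrix of a digraph. -/
noncomputable def matAdj (A : V → V → Prop) : Matrix V V ℤ :=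
  Matrix.of fun x y => if A x y then 1 else 0

/-- The all-ones matrix `J`. -/
def matJ (V : Type*) : Matrix V V ℤ := Matrix.of fun _ _ => 1

open Classical in
/-- The matrix equations in the definition of a doubly regular team semicomplete multipartite
digraph, with constants `t, αᵢ, βᵢ, γᵢ, ηᵢ` (`A₀ = matE A`, `A₁ = matAr A`). -/
def DRConstEq [Fintype V] (A : V → V → Prop) (t : ℤ) (α β γ η : ℕ → ℤ) : Prop :=
  ∀ i j : Fin 2,
    ![matE A, matAr A] i * ![matE A, matAr A] j =
      (if (i : ℕ) + (j : ℕ) = 0 then t else 0) • (1 : Matrix V V ℤ) +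
      α ((i : ℕ) + (j : ℕ)) • matAr A +
      β ((i : ℕ) + (j : ℕ)) • (matAr A)ᵀ +
      γ ((i : ℕ) + (j : ℕ)) • matE A +
      η ((i : ℕ) + (j : ℕ)) • (matJ V - 1 - matAr A - (matAr A)ᵀ - matE A)

/-- A doubly regular `(m,r)`-team semicomplete multipartite digraph. -/
def IsDoublyRegularTeamSMD [Fintype V] (A : V → V → Prop) {m : ℕ} (f : V → Fin m)
    (r : ℕ) : Prop :=
  IsTeamSMD A f r ∧ (∃ k, IsRegularOfValency A k) ∧
  ∃ t α β γ η, DRConstEq A t α β γ η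

/-- `A_j⁺(x)`: out-neighbours of `x` in the part `j` via single arcs. -/
def Aplus (A : V → V → Prop) {m : ℕ} (f : V → Fin m) (j : Fin m) (x : V) : Set V :=
  {y | f y = j ∧ A x y ∧ ¬ A y x}

/-- `E_j(x)`: neighbours of `x` in the part `j` via edges (pairs of opposite arcs). -/
def Epart (A : V → V → Prop) {m : ℕ} (f : V → Fin m) (j : Fin m) (x : V) : Set V :=
  {y | f y = j ∧ A x y ∧ A y x}

/-- Type I: `β₁+β₂-α₁-α₂ = r` and the digraph is an `r`-coclique extension of a
semicomplete digraph. -/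
def TypeI (A : V → V → Prop) (r : ℕ) (α β : ℕ → ℤ) : Prop :=
  β 1 + β 2 - α 1 - α 2 = (r : ℤ) ∧
  ∃ (N : ℕ) (S : Fin N → Fin N → Prop),
    1 ≤ N ∧ IsSemicomplete S ∧ Iso A (cocliqueExt S r)

/-- Type II: `β₁+β₂-α₁-α₂ = 0` and `c_{ij} = c_{ji} = (r - e_{ij})/2` for all pairs `i ≠ j`. -/
def TypeII (A : V → V → Prop) {m : ℕ} (f : V → Fin m) (r : ℕ) (α β : ℕ → ℤ) : Prop :=
  β 1 + β 2 - α 1 - α 2 = 0 ∧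
  ∀ i j : Fin m, i ≠ j → ∃ c e : ℕ,
    (∀ x, f x = i → (Aplus A f j x).ncard = c ∧ (Epart A f j x).ncard = e) ∧
    (∀ y, f y = j → (Aplus A f i y).ncard = c) ∧
    c + c + e = r

/-- Condition (ii) of Type III for the ordered pair `(i,j)`: `V_i` splits as
`V_i' ∪ V_i''` with `(V_i' × V_j) ∪ (V_j × V_i'') ⊆ A⃗Γ`. -/
def TypeIIIsplitB (A : V → V → Prop) {m : ℕ} (f : V → Fin m) (i j : Fin m) : Prop :=
  ∃ S : Set V, S ⊆ {x | f x = i} ∧ S.Nonempty ∧ ({x | f x = i} \ S).Nonempty ∧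
    (∀ x ∈ S, ∀ y : V, f y = j → A x y ∧ ¬ A y x) ∧
    (∀ y : V, f y = j → ∀ x ∈ {x | f x = i} \ S, A y x ∧ ¬ A x y)

/-- Condition (iii) of Type III for the pair `(i,j)`. -/
def TypeIIIsplitC (A : V → V → Prop) {m : ℕ} (f : V → Fin m) (i j : Fin m) : Prop :=
  ∃ S T' : Set V,
    S ⊆ {x | f x = i} ∧ S.Nonempty ∧ ({x | f x = i} \ S).Nonempty ∧
    T' ⊆ {y | f y = j} ∧ T'.Nonempty ∧ ({y | f y = j} \ T').Nonempty ∧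
    (∀ x ∈ S, ∀ y ∈ T', A x y ∧ A y x) ∧
    (∀ x ∈ {x | f x = i} \ S, ∀ y ∈ {y | f y = j} \ T', A x y ∧ A y x) ∧
    (∀ x ∈ S, ∀ y ∈ {y | f y = j} \ T', A x y ∧ ¬ A y x) ∧
    (∀ y ∈ T', ∀ x ∈ {x | f x = i} \ S, A y x ∧ ¬ A x y)

/-- Type III. -/
def TypeIII (A : V → V → Prop) {m : ℕ} (f : V → Fin m) (r : ℕ) (α β : ℕ → ℤ) : Prop :=
  2 * (β 1 + β 2 - α 1 - α 2) = (r : ℤ) ∧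
  ∀ i j : Fin m, i ≠ j →
    (∀ x y : V, f x = i → f y = j → A x y ∧ A y x) ∨
    (TypeIIIsplitB A f i j ∨ TypeIIIsplitB A f j i) ∨
    TypeIIIsplitC A f i j

/-- An `(m,r)`-team tournament: an `(m,r)`-team semicomplete multipartite digraph with
no pair of opposite arcs. -/
def IsTeamTournament (A : V → V → Prop) {m : ℕ} (f : V → Fin m) (r : ℕ) : Prop :=
  IsTeamSMD A f r ∧ ∀ x y : V, ¬ (A x y ∧ A y x)

open Classical in
/-- A doubly regular `(m,r)`-team tournament with parameters `(α,β,γ)`: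
`A² = αA + βAᵀ + γ(J - I - A - Aᵀ)`. -/
def IsDRTeamTournament [Fintype V] (A : V → V → Prop) {m : ℕ} (f : V → Fin m) (r : ℕ)
    (α β γ : ℤ) : Prop :=
  IsTeamTournament A f r ∧ (∃ k, IsRegularOfValency A k) ∧
  matAdj A * matAdj A =
    α • matAdj A + β • (matAdj A)ᵀ + γ • (matJ V - 1 - matAdj A - (matAdj A)ᵀ)

/-- Type II of a doubly regular team tournament: `β - α = 0`, `r` even, and
`|N⁺(x) ∩ V_i| = r/2` for every partite set `V_i` and vertex `x ∉ V_i`. -/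
def TournamentTypeII (A : V → V → Prop) {m : ℕ} (f : V → Fin m) (r : ℕ) (α β : ℤ) : Prop :=
  β = α ∧ Even r ∧ ∀ (i : Fin m) (x : V), f x ≠ i → 2 * {y | f y = i ∧ A x y}.ncard = r

/-- The Cayley digraph `Cay(ℤ₆, {1,2})`. -/
def Cay6 : ZMod 6 → ZMod 6 → Prop := fun x y => y - x = 1 ∨ y - x = 2

/-- The directed cycle `C₄`. -/
def C4 : ZMod 4 → ZMod 4 → Prop := fun x y => y = x + 1

/-!
Two non-adjacent vertices of a semicomplete multipartite digraph lie in the same part, so they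
have the same neighbours. If moreover `∂(x,y) ≥ 3`, no out-neighbour of `x` is an in-neighbour of
`y`, whence `N⁺(x) ⊆ N⁺(y)` and `N⁻(y) ⊆ N⁻(x)`. Weak distance-regularity makes the digraph
regular (the number of `z` with `∂̃(x,z) = d` is `p_{d,dᵀ}^{(0,0)}`), so both inclusions are
equalities.
-/

section Distance

variable {A : V → V → Prop} {x y z : V}

lemma hasPathOfLength_zero_iff : HasPathOfLength A x y 0 ↔ x = y :=
  ⟨fun ⟨p, h0, h1, _⟩ => h0 ▸ h1, fun h => ⟨fun _ => x, rfl, h, fun _ hi => absurd hi (by omega)⟩⟩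

lemma hasPathOfLength_one_iff : HasPathOfLength A x y 1 ↔ A x y := by
  refine ⟨fun ⟨p, h0, h1, hp⟩ => h0 ▸ h1 ▸ hp 0 one_pos, fun h => ?_⟩
  refine ⟨fun i => if i = 0 then x else y, rfl, rfl, fun i hi => ?_⟩
  obtain rfl : i = 0 := by omega
  simpa using h

lemma hasPathOfLength_two (hxz : A x z) (hzy : A z y) : HasPathOfLength A x y 2 := by
  refine ⟨fun i => if i = 0 then x else if i = 1 then z else y, rfl, rfl, fun i hi => ?_⟩
  interval_cases i <;> simpa

lemma ddist_le_of_hasPathOfLength {n : ℕ} (h : HasPathOfLength A x y n) : ddist A x y ≤ n :=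
  Nat.sInf_le h

lemma ddist_self : ddist A x x = 0 :=
  Nat.sInf_eq_zero.mpr (Or.inl (hasPathOfLength_zero_iff.mpr rfl))

lemma ddist_eq_one_iff : ddist A x y = 1 ↔ x ≠ y ∧ A x y := by
  constructor
  · intro h
    have hne : {n | HasPathOfLength A x y n}.Nonempty := by
      by_contra hempty
      rw [Set.not_nonempty_iff_eq_empty] at hempty
      simp [ddist, hempty] at h
    have hpath : HasPathOfLength A x y 1 := h ▸ Nat.sInf_mem hne
    refine ⟨?_, hasPathOfLength_one_iff.mp hpath⟩
    rintro rfl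
    simp [ddist_self] at h
  · rintro ⟨hxy, hA⟩
    have hpath : HasPathOfLength A x y 1 := hasPathOfLength_one_iff.mpr hA
    have hpos : ddist A x y ≠ 0 := by
      rw [ddist, Ne, Nat.sInf_eq_zero]
      rintro (h0 | hempty)
      · exact hxy (hasPathOfLength_zero_iff.mp h0)
      · exact Set.eq_empty_iff_forall_notMem.mp hempty 1 hpath
    have := ddist_le_of_hasPathOfLength hpath
    omega

end Distance

lemma ncard_setOf_comp_eq_of_ncard_fiber_eq {α : Type*} [Finite V] {f g : V → α}
    (hfg : ∀ a, {v | f v = a}.ncard = {v | g v = a}.ncard) (p : α → Prop) :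
    {v | p (f v)}.ncard = {v | p (g v)}.ncard := by
  classical
  have := Fintype.ofFinite V
  simp only [Set.ncard_eq_toFinset_card', Set.toFinset_ofPred] at hfg ⊢
  have hmap : Finset.univ.val.map f = Finset.univ.val.map g := by
    ext a
    simpa [Multiset.count_map, Finset.card, Finset.filter_val, eq_comm] using hfg a
  have hcount := congrArg (Multiset.countP p) hmap
  rw [Multiset.countP_map, Multiset.countP_map] at hcount
  simpa [Finset.card, Finset.filter_val] using hcount

lemma IsWDRD.ncard_tdist_eq {A : V → V → Prop} (hw : IsWDRD A) (x y : V) (d : ℕ × ℕ) :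
    {z | tdist A x z = d}.ncard = {z | tdist A y z = d}.ncard := by
  have hpnum : ∀ u, {z | tdist A u z = d}.ncard = pnum A d d.swap u u := by
    intro u
    refine congrArg Set.ncard (Set.ext fun z => ?_)
    simp only [Set.mem_ofPred_eq, iff_self_and]
    rintro rfl
    rfl
  rw [hpnum, hpnum]
  exact hw.2.2 _ _ _ _ _ _ (by simp [tdist, ddist_self])

lemma IsWDRD.ncard_outNeighbors_eq [Finite V] {A : V → V → Prop} (hw : IsWDRD A)
    (hA : ∀ v, ¬ A v v) (x y : V) : {w | A x w}.ncard = {w | A y w}.ncard := by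
  have hout : ∀ u, {w | A u w} = {w | (tdist A u w).1 = 1} := fun u => Set.ext fun w =>
    ⟨fun h => ddist_eq_one_iff.mpr ⟨fun huw => hA w (huw ▸ h), h⟩,
      fun h => (ddist_eq_one_iff.mp h).2⟩
  rw [hout, hout]
  exact ncard_setOf_comp_eq_of_ncard_fiber_eq (hw.ncard_tdist_eq x y) (·.1 = 1)

lemma IsWDRD.ncard_inNeighbors_eq [Finite V] {A : V → V → Prop} (hw : IsWDRD A)
    (hA : ∀ v, ¬ A v v) (x y : V) : {w | A w x}.ncard = {w | A w y}.ncard := by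
  have hin : ∀ u, {w | A w u} = {w | (tdist A u w).2 = 1} := fun u => Set.ext fun w =>
    ⟨fun h => ddist_eq_one_iff.mpr ⟨fun hwu => hA u (hwu ▸ h), h⟩,
      fun h => (ddist_eq_one_iff.mp h).2⟩
  rw [hin, hin]
  exact ncard_setOf_comp_eq_of_ncard_fiber_eq (hw.ncard_tdist_eq x y) (·.2 = 1)

lemma IsSemicompleteMultipartiteWith.adj_or_adj_iff {A : V → V → Prop} {m : ℕ}
    {f : V → Fin m} (hf : IsSemicompleteMultipartiteWith A f) (x w : V) :
    (A x w ∨ A w x) ↔ f x ≠ f w := by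
  by_cases hxw : x = w
  · subst hxw
    simp [hf.1 x]
  · exact hf.2.2 x w hxw

theorem statement_8_general {V : Type*} [Fintype V] (A : V → V → Prop)
    (hsm : IsSemicompleteMultipartite A) (h : IsCWDRD A)
    (x y : V) (hxy : ¬ A x y ∧ ¬ A y x) :
    (∀ w : V, (A x w ∨ A w x) ↔ (A y w ∨ A w y)) ∧
    (3 ≤ ddist A x y → {w | A x w} = {w | A y w} ∧ {w | A w x} = {w | A w y}) := by
  obtain ⟨m, -, f, hf⟩ := hsm
  have hfxy : f x = f y := by
    simpa using (hf.adj_or_adj_iff x y).not.mp (not_or.mpr hxy)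
  have hadj : ∀ w, (A x w ∨ A w x) ↔ (A y w ∨ A w y) := fun w => by
    rw [hf.adj_or_adj_iff, hf.adj_or_adj_iff, hfxy]
  refine ⟨hadj, fun h3 => ?_⟩
  have hno_two_path : ∀ w, A x w → ¬ A w y := fun w hxw hwy => by
    have := ddist_le_of_hasPathOfLength (hasPathOfLength_two hxw hwy)
    omega
  have hout : {w | A x w} ⊆ {w | A y w} := fun w hxw =>
    ((hadj w).mp (Or.inl hxw)).resolve_right (hno_two_path w hxw)
  have hin : {w | A w y} ⊆ {w | A w x} := fun w hwy =>
    ((hadj w).mpr (Or.inr hwy)).resolve_left fun hxw => hno_two_path w hxw hwy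
  exact ⟨Set.eq_of_subset_of_ncard_le hout (h.1.ncard_outNeighbors_eq hf.1 y x).le,
    (Set.eq_of_subset_of_ncard_le hin (h.1.ncard_inNeighbors_eq hf.1 x y).le).symm⟩

/-- if `y ∉ N⁺(x) ∪ N⁻(x)` then `w ∈ N⁺(x) ∪ N⁻(x) ↔ w ∈ N⁺(y) ∪ N⁻(y)`;
moreover if `∂(x,y) ≥ 3` then `N⁺(x) = N⁺(y)` and `N⁻(x) = N⁻(y)`. -/
theorem statement_8 {V : Type*} [Fintype V] [Nonempty V] (A : V → V → Prop)
    (hsm : IsSemicompleteMultipartite A) (h : IsCWDRD A)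
    (x y : V) (hxy : ¬ A x y ∧ ¬ A y x) :
    (∀ w : V, (A x w ∨ A w x) ↔ (A y w ∨ A w y)) ∧
    (3 ≤ ddist A x y → {w | A x w} = {w | A y w} ∧ {w | A w x} = {w | A w y}) :=
  statement_8_general A hsm h x y hxy

end Paper
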